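/- Let ℍⁿ be the n-fold product of the real quaternions, regarded as a right ℍ-module, with quaternionic Hermitian inner product and the associated real inner product given by its real part. Let v ∈ ℍⁿ be a unit vector and set V = v·Im ℍ = { v·q : q ∈ Im ℍ }, where Im ℍ is the space of purely imaginary quaternions. Then V is a 3-dimensional real subspace of ℍⁿ, and for every unit vector w ∈ V there exist pairwise orthogonal purely imaginary unit quaternions q₁, q₂, q₃ with q₁·q₂ = q₃ such that w·q₁ ∈ V, w·q₂ ∈ V, and w·q₃ is orthogonal to V. -/

import Mathlib

open Quaternion
open scoped RealInnerProductSpace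

/-- The submodule of purely imaginary quaternions. -/
def imH : Submodule ℝ (Quaternion ℝ) where
  carrier := {q | q.re = 0}
  add_mem' := by intro a b ha hb; simp only [Set.mem_setOf_eq] at *; simp [ha, hb]
  zero_mem' := by simp
  smul_mem' := by intro c q hq; simp only [Set.mem_setOf_eq] at *; simp [hq]

/-- The real-linear map `ℍ →ₗ[ℝ] ℍⁿ`, `q ↦ v·q` (componentwise right multiplication of
the fixed vector `v ∈ ℍⁿ` by the quaternion `q`). -/
noncomputable def lmulVec (n : ℕ) (v : PiLp 2 fun _ : Fin n => Quaternion ℝ) :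
    Quaternion ℝ →ₗ[ℝ] (PiLp 2 fun _ : Fin n => Quaternion ℝ) :=
  (WithLp.linearEquiv 2 ℝ (Fin n → Quaternion ℝ)).symm.toLinearMap ∘ₗ
    LinearMap.pi fun i => LinearMap.mulLeft ℝ (v i)

/-! A unit vector of `V = v·Im ℍ` is `w = v·p` with `p` a unit imaginary quaternion, because
`q ↦ v·q` is an isometry when `‖v‖ = 1`. Complete `p` to a quaternionic triple
`(q₁, q₂, p)` with `q₂ = -q₁p` and `q₁ ⊥ p` imaginary (possible since `dim Im ℍ = 3`).
Right multiplication commutes with `v·`, so `w·qᵢ = v·(p qᵢ)` with `p qᵢ` imaginary for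
`i = 1, 2`, while `w·p = v·p² = -v` is orthogonal to `v·Im ℍ`. -/

theorem Submodule.exists_norm_eq_one_inner_eq_zero {E : Type*} [NormedAddCommGroup E]
    [InnerProductSpace ℝ E] (K : Submodule ℝ E) [FiniteDimensional ℝ K]
    (hK : 1 < Module.finrank ℝ K) (x : E) : ∃ u ∈ K, ‖u‖ = 1 ∧ ⟪u, x⟫ = 0 := by
  have hker : LinearMap.ker ((innerₛₗ ℝ x).comp K.subtype) ≠ ⊥ :=
    LinearMap.ker_ne_bot_of_finrank_lt (by rwa [Module.finrank_self])
  obtain ⟨y, hy, hy0⟩ := Submodule.exists_mem_ne_zero_of_ne_bot hker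
  have hy0' : (y : E) ≠ 0 := by exact_mod_cast hy0
  refine ⟨(‖(y : E)‖⁻¹ : ℝ) • (y : E), K.smul_mem _ y.2, norm_smul_inv_norm hy0', ?_⟩
  rw [real_inner_smul_left, real_inner_comm]
  simp only [LinearMap.mem_ker, LinearMap.comp_apply, Submodule.subtype_apply,
    innerₛₗ_apply_apply] at hy
  rw [hy, mul_zero]

namespace Quaternion

theorem imH_eq_orthogonal_one : imH = (ℝ ∙ (1 : ℍ[ℝ]))ᗮ := by
  ext q
  rw [Submodule.mem_orthogonal_singleton_iff_inner_right, inner_def, one_mul, re_star]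
  rfl

theorem finrank_imH : Module.finrank ℝ imH = 3 := by
  have h := (ℝ ∙ (1 : ℍ[ℝ])).finrank_add_finrank_orthogonal
  rw [finrank_span_singleton one_ne_zero, finrank_eq_four, ← imH_eq_orthogonal_one] at h
  omega

theorem mul_self_eq_neg_one {p : ℍ[ℝ]} (hp : p.re = 0) (hp1 : ‖p‖ = 1) : p * p = -1 := by
  have h := sq_eq_neg_normSq.mpr hp
  rwa [normSq_eq_norm_mul_self, hp1, mul_one, coe_one, sq] at h

theorem re_mul_eq_neg_inner (a : ℍ[ℝ]) {b : ℍ[ℝ]} (hb : b.re = 0) :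
    (a * b).re = -⟪a, b⟫ := by
  rw [inner_def, star_eq_neg.mpr hb, mul_neg, re_neg, neg_neg]

theorem mul_mem_imH {p q : ℍ[ℝ]} (hq : q.re = 0) (hpq : ⟪p, q⟫ = 0) : p * q ∈ imH := by
  show (p * q).re = 0
  rw [re_mul_eq_neg_inner p hq, hpq, neg_zero]

theorem re_mul_comm (a b : ℍ[ℝ]) : (a * b).re = (b * a).re := by
  simp only [re_mul]; ring

theorem inner_mul_left_mul_left (a x y : ℍ[ℝ]) : ⟪a * x, a * y⟫ = ‖a‖ ^ 2 * ⟪x, y⟫ := by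
  rw [inner_def, inner_def, star_mul, ← mul_assoc, re_mul_comm, ← mul_assoc, ← mul_assoc,
    star_mul_self, mul_assoc, coe_mul_eq_smul, re_smul, smul_eq_mul, normSq_eq_norm_mul_self,
    sq]

theorem exists_orthonormal_re_eq_zero_mul_eq {p : ℍ[ℝ]} (hp : p.re = 0) (hp1 : ‖p‖ = 1) :
    ∃ q₁ q₂ : ℍ[ℝ], q₁.re = 0 ∧ q₂.re = 0 ∧ ‖q₁‖ = 1 ∧ ‖q₂‖ = 1 ∧
      ⟪q₁, q₂⟫ = 0 ∧ ⟪q₁, p⟫ = 0 ∧ ⟪q₂, p⟫ = 0 ∧ q₁ * q₂ = p := by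
  obtain ⟨q₁, hq₁ : q₁.re = 0, hq₁1, hq₁p⟩ :=
    imH.exists_norm_eq_one_inner_eq_zero (by rw [finrank_imH]; norm_num) p
  have hq₁sq := mul_self_eq_neg_one hq₁ hq₁1
  have hmul : q₁ * -(q₁ * p) = p := by
    rw [mul_neg, ← mul_assoc, hq₁sq, neg_one_mul, neg_neg]
  have hq₂ : (-(q₁ * p)).re = 0 := by
    rw [re_neg, re_mul_eq_neg_inner q₁ hp, hq₁p, neg_zero, neg_zero]
  refine ⟨q₁, -(q₁ * p), hq₁, hq₂, hq₁1, by rw [norm_neg, norm_mul, hq₁1, hp1, one_mul], ?_,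
    hq₁p, ?_, hmul⟩
  · rw [← neg_neg ⟪_, _⟫, ← re_mul_eq_neg_inner q₁ hq₂, hmul, hp, neg_zero]
  · rw [← neg_neg ⟪_, _⟫, ← re_mul_eq_neg_inner _ hp, neg_mul, mul_assoc,
      mul_self_eq_neg_one hp hp1]
    simp [hq₁]

end Quaternion

section lmulVec

variable {n : ℕ} (v : PiLp 2 fun _ : Fin n => ℍ[ℝ])

theorem lmulVec_apply (q : ℍ[ℝ]) (i : Fin n) : lmulVec n v q i = v i * q := rfl

theorem toLp_lmulVec_mul (p q : ℍ[ℝ]) :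
    (WithLp.toLp 2 fun i => lmulVec n v p i * q) = lmulVec n v (p * q) :=
  PiLp.ext fun i => mul_assoc (v i) p q

theorem inner_lmulVec_lmulVec (x y : ℍ[ℝ]) :
    ⟪lmulVec n v x, lmulVec n v y⟫ = ‖v‖ ^ 2 * ⟪x, y⟫ := by
  simp only [PiLp.inner_apply, lmulVec_apply, Quaternion.inner_mul_left_mul_left,
    ← Finset.sum_mul, PiLp.norm_sq_eq_of_L2]

theorem toLp_lmulVec_mul_mem_map_imH {p q : ℍ[ℝ]} (hq : q.re = 0) (hpq : ⟪p, q⟫ = 0) :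
    (WithLp.toLp 2 fun i => lmulVec n v p i * q) ∈ Submodule.map (lmulVec n v) imH := by
  rw [toLp_lmulVec_mul]
  exact Submodule.mem_map_of_mem (Quaternion.mul_mem_imH hq hpq)

end lmulVec

/-- For a unit vector `v ∈ ℍⁿ` the subspace `V = v·Im ℍ` is 3-dimensional and has
constant quaternionic Kähler angle `(0, 0, π/2)`: for every unit vector `w ∈ V` there
are pairwise orthogonal purely imaginary unit quaternions `q₁, q₂, q₃` with
`q₁·q₂ = q₃`, `w·q₁ ∈ V`, `w·q₂ ∈ V` and `w·q₃` orthogonal to `V`. -/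
theorem v_mul_imH_quaternionic_kahler_angle
    (n : ℕ) (v : PiLp 2 fun _ : Fin n => Quaternion ℝ) (hv : ‖v‖ = 1) :
    Module.finrank ℝ (Submodule.map (lmulVec n v) imH) = 3 ∧
    ∀ w ∈ Submodule.map (lmulVec n v) imH, ‖w‖ = 1 →
      ∃ q₁ q₂ q₃ : Quaternion ℝ,
        q₁.re = 0 ∧ q₂.re = 0 ∧ q₃.re = 0 ∧
        ‖q₁‖ = 1 ∧ ‖q₂‖ = 1 ∧ ‖q₃‖ = 1 ∧
        ⟪q₁, q₂⟫ = 0 ∧ ⟪q₁, q₃⟫ = 0 ∧ ⟪q₂, q₃⟫ = 0 ∧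
        q₁ * q₂ = q₃ ∧
        (WithLp.toLp 2 fun i => w i * q₁) ∈ Submodule.map (lmulVec n v) imH ∧
        (WithLp.toLp 2 fun i => w i * q₂) ∈ Submodule.map (lmulVec n v) imH ∧
        ∀ u ∈ Submodule.map (lmulVec n v) imH,
          ⟪(show PiLp 2 (fun _ : Fin n => Quaternion ℝ) from WithLp.toLp 2 fun i => w i * q₃), u⟫ = 0 := by
  have hinner : ∀ x y, ⟪lmulVec n v x, lmulVec n v y⟫ = ⟪x, y⟫ := fun x y => by
    rw [inner_lmulVec_lmulVec, hv, one_pow, one_mul]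
  let f := (lmulVec n v).isometryOfInner hinner
  refine ⟨?_, ?_⟩
  · exact (Submodule.equivMapOfInjective _ f.injective imH).finrank_eq.symm.trans
      Quaternion.finrank_imH
  rintro _ ⟨p, hp : p.re = 0, rfl⟩ hw
  have hp1 : ‖p‖ = 1 := (f.norm_map p).symm.trans hw
  obtain ⟨q₁, q₂, hq₁, hq₂, hq₁1, hq₂1, hq₁q₂, hq₁p, hq₂p, hmul⟩ :=
    Quaternion.exists_orthonormal_re_eq_zero_mul_eq hp hp1
  refine ⟨q₁, q₂, p, hq₁, hq₂, hp, hq₁1, hq₂1, hp1, hq₁q₂, hq₁p, hq₂p, hmul,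
    toLp_lmulVec_mul_mem_map_imH v hq₁ (by rwa [real_inner_comm]),
    toLp_lmulVec_mul_mem_map_imH v hq₂ (by rwa [real_inner_comm]), ?_⟩
  rintro _ ⟨y, hy : y.re = 0, rfl⟩
  rw [toLp_lmulVec_mul, Quaternion.mul_self_eq_neg_one hp hp1]
  change ⟪lmulVec n v (-1), lmulVec n v y⟫ = 0
  simp [hinner, Quaternion.inner_def, hy]
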